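/- If a cherry reduction is applied to a rooted binary tree-child network, the result is again a rooted binary tree-child network. -/

import Mathlib

/-!  Formalisation preliminaries for rooted and unrooted binary phylogenetic
networks, cherry reductions, cherry-reduction sequences and cherry-picking
sequences, following Döcker & Linz. -/

/-- A finite directed graph whose vertices are natural numbers. -/
structure DNet where
  verts : Finset ℕ
  arcs : Finset (ℕ × ℕ)

namespace DNet

/-- in-degree of a vertex -/
def inDeg (N : DNet) (v : ℕ) : ℕ := (N.arcs.filter (fun p => p.2 = v)).card

/-- out-degree of a vertex -/
def outDeg (N : DNet) (v : ℕ) : ℕ := (N.arcs.filter (fun p => p.1 = v)).card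

/-- the arc relation -/
def Arc (N : DNet) (u v : ℕ) : Prop := (u, v) ∈ N.arcs

/-- the digraph has no directed cycle -/
def Acyclic (N : DNet) : Prop := ∀ v, ¬ Relation.TransGen N.Arc v v

/-- root: in-degree 0 and out-degree 2 -/
def IsRoot (N : DNet) (v : ℕ) : Prop := v ∈ N.verts ∧ N.inDeg v = 0 ∧ N.outDeg v = 2

/-- leaf: in-degree 1 and out-degree 0 -/
def IsLeaf (N : DNet) (v : ℕ) : Prop := v ∈ N.verts ∧ N.inDeg v = 1 ∧ N.outDeg v = 0

/-- tree vertex: in-degree 1 and out-degree 2 -/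
def IsTreeVertex (N : DNet) (v : ℕ) : Prop := v ∈ N.verts ∧ N.inDeg v = 1 ∧ N.outDeg v = 2

/-- reticulation: in-degree 2 and out-degree 1 -/
def IsRet (N : DNet) (v : ℕ) : Prop := v ∈ N.verts ∧ N.inDeg v = 2 ∧ N.outDeg v = 1

/-- the network consists of a single vertex -/
def SingleVertex (N : DNet) : Prop := N.verts.card = 1 ∧ N.arcs = ∅

/-- the reticulation number of a rooted network: number of in-degree-2 vertices -/
def retNum (N : DNet) : ℕ := (N.verts.filter (fun v => N.inDeg v = 2)).card

/-- tree-child: every vertex with a child has a child that is a tree vertex or a leaf -/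
def TreeChild (N : DNet) : Prop :=
  ∀ v ∈ N.verts, N.outDeg v ≠ 0 → ∃ c, (v, c) ∈ N.arcs ∧ (N.IsTreeVertex c ∨ N.IsLeaf c)

/-- a stack: two reticulations joined by an arc -/
def HasStack (N : DNet) : Prop := ∃ u v, N.IsRet u ∧ N.IsRet v ∧ (u, v) ∈ N.arcs

/-- a pair of sibling reticulations: two reticulations with a common parent -/
def HasSiblingRets (N : DNet) : Prop :=
  ∃ p u v, u ≠ v ∧ N.IsRet u ∧ N.IsRet v ∧ (p, u) ∈ N.arcs ∧ (p, v) ∈ N.arcs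

/-- stack-free -/
def StackFree (N : DNet) : Prop := ¬ N.HasStack

end DNet

/-- `N` is a rooted binary phylogenetic network with leaf set `X`
(including the degenerate single-vertex network when `|X| = 1`). -/
def IsRootedBinaryNet (N : DNet) (X : Finset ℕ) : Prop :=
  (∃ x, X = {x} ∧ N.verts = {x} ∧ N.arcs = ∅) ∨
  ((∀ p ∈ N.arcs, p.1 ∈ N.verts ∧ p.2 ∈ N.verts) ∧
   (∀ p ∈ N.arcs, p.1 ≠ p.2) ∧
   N.Acyclic ∧
   (∃! ρ, ρ ∈ N.verts ∧ N.inDeg ρ = 0) ∧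
   (∀ v ∈ N.verts, N.IsRoot v ∨ N.IsLeaf v ∨ N.IsTreeVertex v ∨ N.IsRet v) ∧
   (∀ v, N.IsLeaf v ↔ v ∈ X))

/-- `[a,b]` is a cherry of the rooted network `N` (with `a` the leaf to be deleted). -/
def RCherry (N : DNet) (a b : ℕ) : Prop :=
  a ≠ b ∧ N.IsLeaf a ∧ N.IsLeaf b ∧ ∃ p, (p, a) ∈ N.arcs ∧ (p, b) ∈ N.arcs

/-- `(a,b)` is a reticulated cherry of the rooted network `N` with reticulation leaf `a`:
the parent of `a` is a reticulation and receives an arc from the parent of `b`. -/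
def RRetCherry (N : DNet) (a b : ℕ) : Prop :=
  a ≠ b ∧ N.IsLeaf a ∧ N.IsLeaf b ∧
  ∃ pa pb, (pa, a) ∈ N.arcs ∧ (pb, b) ∈ N.arcs ∧ N.IsRet pa ∧ (pb, pa) ∈ N.arcs

/-- `M` is obtained from the rooted network `N` by reducing the cherry `[a,b]`:
delete `a` and suppress (or, if it is the root, delete) the resulting degree-2 vertex. -/
def RReduceCherry (N M : DNet) (a b : ℕ) : Prop :=
  RCherry N a b ∧
  ∃ p, (p, a) ∈ N.arcs ∧ (p, b) ∈ N.arcs ∧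
    ((N.inDeg p = 0 ∧ M.verts = N.verts \ {a, p} ∧ M.arcs = N.arcs \ {(p, a), (p, b)}) ∨
     (∃ g, (g, p) ∈ N.arcs ∧ M.verts = N.verts \ {a, p} ∧
        M.arcs = insert (g, b) (N.arcs \ {(g, p), (p, a), (p, b)})))

/-- `M` is obtained from the rooted network `N` by reducing the reticulated cherry `(a,b)`
with reticulation leaf `a`: delete the reticulation arc `(p_b, p_a)` and suppress the two
resulting degree-2 vertices. -/
def RReduceRetCherry (N M : DNet) (a b : ℕ) : Prop :=
  RRetCherry N a b ∧
  ∃ pa pb qa qb, (pa, a) ∈ N.arcs ∧ (pb, b) ∈ N.arcs ∧ N.IsRet pa ∧ (pb, pa) ∈ N.arcs ∧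
    (qa, pa) ∈ N.arcs ∧ qa ≠ pb ∧ (qb, pb) ∈ N.arcs ∧
    M.verts = N.verts \ {pa, pb} ∧
    M.arcs = insert (qa, a) (insert (qb, b)
      (N.arcs \ {(pb, pa), (pa, a), (qa, pa), (pb, b), (qb, pb)}))

/-- A recorded reduction: either a cherry pair `[x,y]` or a reticulated-cherry pair `(x,y)`
(the deleted leaf, resp. the reticulation leaf, is listed first). -/
inductive Pick where
  | cherry (x y : ℕ)
  | ret (x y : ℕ)
deriving DecidableEq

namespace Pick

/-- first coordinate -/
def fst : Pick → ℕ
  | cherry x _ => x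
  | ret x _ => x

/-- second coordinate -/
def snd : Pick → ℕ
  | cherry _ y => y
  | ret _ y => y

/-- the pair contains the element `z` -/
def Contains (r : Pick) (z : ℕ) : Prop := r.fst = z ∨ r.snd = z

/-- the pair is a reticulated-cherry pair -/
def IsRetPair : Pick → Prop
  | cherry _ _ => False
  | ret _ _ => True

/-- the pair is a cherry pair -/
def IsCherryPair : Pick → Prop
  | cherry _ _ => True
  | ret _ _ => False

end Pick

/-- The step from `N` to `M` is the cherry reduction recorded by the pick `r`
(rooted version). -/
def RStep (N M : DNet) : Pick → Prop
  | .cherry x y => RReduceCherry N M x y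
  | .ret x y => RReduceRetCherry N M x y

/-- `(Ns 0, …, Ns k)` is a cherry-reduction sequence of rooted networks whose associated
cherry-picking sequence is `(rs 0, …, rs (k-1))`. -/
def RCherrySeq (Ns : ℕ → DNet) (rs : ℕ → Pick) (k : ℕ) : Prop :=
  ∀ i < k, RStep (Ns i) (Ns (i + 1)) (rs i)

/-- `(Ns 0, …, Ns k)` is a cherry-reduction sequence of rooted networks. -/
def RReductionSeq (Ns : ℕ → DNet) (k : ℕ) : Prop :=
  ∀ i < k, ∃ r, RStep (Ns i) (Ns (i + 1)) r

/-- `R` is a rooted orchard network: it admits a complete cherry-reduction sequence. -/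
def Orchard (R : DNet) : Prop :=
  ∃ Ns k, Ns 0 = R ∧ RReductionSeq Ns k ∧ (Ns k).SingleVertex

/-- `j = s(i)`: the smallest index `j > i` (within the sequence of length `k`) such that
`rs j` contains the first coordinate of `rs i`. -/
def SuccAt (rs : ℕ → Pick) (k i j : ℕ) : Prop :=
  i < j ∧ j < k ∧ (rs j).Contains (rs i).fst ∧
  ∀ l, i < l → l < j → ¬ (rs l).Contains (rs i).fst

/-- Property (P1): the successor pair of every reticulated-cherry pair, if it exists,
is a cherry pair. -/
def SeqP1 (rs : ℕ → Pick) (k : ℕ) : Prop :=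
  ∀ i j, (rs i).IsRetPair → SuccAt rs k i j → (rs j).IsCherryPair

/-- Property (P2): no element of the sequence is the successor pair of two distinct
reticulated-cherry pairs. -/
def SeqP2 (rs : ℕ → Pick) (k : ℕ) : Prop :=
  ∀ i i' j, i ≠ i' → (rs i).IsRetPair → (rs i').IsRetPair →
    SuccAt rs k i j → SuccAt rs k i' j → False

/-- A tree-child cherry-picking sequence: one satisfying (P1) and (P2). -/
def TreeChildSeq (rs : ℕ → Pick) (k : ℕ) : Prop := SeqP1 rs k ∧ SeqP2 rs k

/-- Property (P3): the first coordinate of each pair does not occur as the second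
coordinate of any later pair. -/
def SeqP3 (rs : ℕ → Pick) (k : ℕ) : Prop :=
  ∀ i j, i < j → j < k → (rs i).fst ≠ (rs j).snd

/-- A finite undirected graph whose vertices are natural numbers. -/
structure UNet where
  verts : Finset ℕ
  edges : Finset (Sym2 ℕ)

namespace UNet

/-- degree of a vertex -/
def deg (U : UNet) (v : ℕ) : ℕ := (U.edges.filter (fun e => v ∈ e)).card

/-- adjacency -/
def Adj (U : UNet) (u v : ℕ) : Prop := u ≠ v ∧ s(u, v) ∈ U.edges

/-- connectedness -/
def Connected (U : UNet) : Prop :=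
  ∀ u ∈ U.verts, ∀ v ∈ U.verts, Relation.ReflTransGen U.Adj u v

/-- leaf: degree-1 vertex -/
def IsLeaf (U : UNet) (v : ℕ) : Prop := v ∈ U.verts ∧ U.deg v = 1

/-- the network consists of a single vertex -/
def SingleVertex (U : UNet) : Prop := U.verts.card = 1 ∧ U.edges = ∅

/-- the reticulation number of an unrooted network: `|E| - (|V| - 1)` -/
def retNum (U : UNet) : ℕ := U.edges.card - (U.verts.card - 1)

end UNet

/-- `U` is an unrooted binary phylogenetic network with leaf set `X`
(including the degenerate single-vertex network when `|X| = 1`). -/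
def IsUnrootedBinaryNet (U : UNet) (X : Finset ℕ) : Prop :=
  (∃ x, X = {x} ∧ U.verts = {x} ∧ U.edges = ∅) ∨
  ((∀ e ∈ U.edges, ¬ e.IsDiag ∧ ∀ v ∈ e, v ∈ U.verts) ∧
   U.Connected ∧
   (∀ v ∈ U.verts, U.deg v = 1 ∨ U.deg v = 3) ∧
   (∀ v, U.IsLeaf v ↔ v ∈ X))

/-- `[a,b]` is a cherry of the unrooted network `U`. -/
def UCherry (U : UNet) (a b : ℕ) : Prop :=
  a ≠ b ∧ U.IsLeaf a ∧ U.IsLeaf b ∧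
  ((∃ p, s(a, p) ∈ U.edges ∧ s(b, p) ∈ U.edges ∧ p ≠ a ∧ p ≠ b) ∨ U.edges = {s(a, b)})

/-- the edge `{u,v}` lies on a cycle of `U` -/
def UOnCycle (U : UNet) (u v : ℕ) : Prop :=
  s(u, v) ∈ U.edges ∧
  Relation.ReflTransGen (fun x y => x ≠ y ∧ s(x, y) ∈ U.edges ∧ s(x, y) ≠ s(u, v)) u v

/-- `(a,b)` is a reticulated cherry of the unrooted network `U` with reticulation
edge `{u,v}`. -/
def URetCherry (U : UNet) (a b : ℕ) : Prop :=
  a ≠ b ∧ U.IsLeaf a ∧ U.IsLeaf b ∧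
  ∃ u v, s(a, u) ∈ U.edges ∧ s(u, v) ∈ U.edges ∧ s(v, b) ∈ U.edges ∧
    u ≠ v ∧ u ≠ a ∧ v ≠ b ∧ UOnCycle U u v

/-- `W` is obtained from `U` by reducing the cherry `[a,b]`: delete `a` and, if `U` has
at least two edges, suppress the resulting degree-2 vertex. -/
def UReduceCherry (U W : UNet) (a b : ℕ) : Prop :=
  UCherry U a b ∧
  ((U.edges = {s(a, b)} ∧ W.verts = U.verts \ {a} ∧ W.edges = ∅) ∨
   (∃ p g, s(a, p) ∈ U.edges ∧ s(b, p) ∈ U.edges ∧ s(p, g) ∈ U.edges ∧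
      p ≠ a ∧ p ≠ b ∧ g ≠ a ∧ g ≠ b ∧ g ≠ p ∧
      W.verts = U.verts \ {a, p} ∧
      W.edges = insert s(b, g) (U.edges \ {s(a, p), s(b, p), s(p, g)})))

/-- `W` is obtained from `U` by reducing the reticulated cherry `(a,b)`: delete the
reticulation edge `{u,v}` and suppress the two resulting degree-2 vertices. -/
def UReduceRetCherry (U W : UNet) (a b : ℕ) : Prop :=
  URetCherry U a b ∧
  ∃ u v ga gb, s(a, u) ∈ U.edges ∧ s(u, v) ∈ U.edges ∧ s(v, b) ∈ U.edges ∧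
    u ≠ v ∧ u ≠ a ∧ v ≠ b ∧ UOnCycle U u v ∧
    s(u, ga) ∈ U.edges ∧ ga ≠ a ∧ ga ≠ v ∧ ga ≠ u ∧
    s(v, gb) ∈ U.edges ∧ gb ≠ b ∧ gb ≠ u ∧ gb ≠ v ∧
    W.verts = U.verts \ {u, v} ∧
    W.edges = insert s(a, ga) (insert s(b, gb)
      (U.edges \ {s(u, v), s(a, u), s(u, ga), s(v, b), s(v, gb)}))

/-- The step from `U` to `W` is the cherry reduction recorded by the pick `r`
(unrooted version). -/
def UStep (U W : UNet) : Pick → Prop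
  | .cherry x y => UReduceCherry U W x y
  | .ret x y => UReduceRetCherry U W x y

/-- `(Us 0, …, Us k)` is a cherry-reduction sequence of unrooted networks whose associated
cherry-picking sequence is `(rs 0, …, rs (k-1))`. -/
def UCherrySeq (Us : ℕ → UNet) (rs : ℕ → Pick) (k : ℕ) : Prop :=
  ∀ i < k, UStep (Us i) (Us (i + 1)) (rs i)

/-- `(Us 0, …, Us k)` is a cherry-reduction sequence of unrooted networks. -/
def UReductionSeq (Us : ℕ → UNet) (k : ℕ) : Prop :=
  ∀ i < k, ∃ r, UStep (Us i) (Us (i + 1)) r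

/-- The rooted network `R` is an orientation of the unrooted network `U`: `U` is obtained
from `R` by forgetting arc directions and suppressing the root. -/
def IsOrientationOf (R : DNet) (U : UNet) : Prop :=
  (R.arcs = ∅ ∧ U.edges = ∅ ∧ U.verts = R.verts) ∨
  (∃ ρ c₁ c₂, ρ ∈ R.verts ∧ R.inDeg ρ = 0 ∧ c₁ ≠ c₂ ∧
    (ρ, c₁) ∈ R.arcs ∧ (ρ, c₂) ∈ R.arcs ∧
    U.verts = R.verts.erase ρ ∧
    U.edges = insert s(c₁, c₂)
      ((R.arcs.filter (fun p => p.1 ≠ ρ)).image (fun p => s(p.1, p.2))))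

/-- `U` is an unrooted tree-child network on `X`: it has a tree-child orientation. -/
def UnrootedTreeChild (U : UNet) (X : Finset ℕ) : Prop :=
  ∃ R : DNet, IsRootedBinaryNet R X ∧ R.TreeChild ∧ IsOrientationOf R U

/-- The pick `r` is one of the picks associated with the recorded reduction `p`:
it must agree with `p` on cherry reductions, and may swap the two coordinates of a
reticulated-cherry reduction. -/
def PickAssoc : Pick → Pick → Prop
  | .cherry x y, r => r = .cherry x y
  | .ret x y, r => r = .ret x y ∨ r = .ret y x

/-- `X`-labelled isomorphism of unrooted networks. -/
def UIso (X : Finset ℕ) (U W : UNet) : Prop :=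
  ∃ f : ℕ → ℕ, Set.BijOn f ↑U.verts ↑W.verts ∧ (∀ x ∈ X, f x = x) ∧
    W.edges = U.edges.image (Sym2.map f)

/-! A cherry reduction changes the network only next to the cherry. A surviving vertex that still
has a parent keeps its in- and out-degree: where a parent or a child is replaced, the old and the
new neighbour differ by a transposition of labels, which carries one neighbourhood bijectively
onto the other. So a child that was a tree vertex or a leaf remains one. The tree-child witness of
a vertex is lost only when its arc is redirected to a cherry leaf, and then that leaf is a new leaf
child. -/

namespace DNet

variable {M N : DNet} {u v w x y : ℕ}

lemma outDeg_ne_zero_of_mem (h : (x, y) ∈ N.arcs) : N.outDeg x ≠ 0 :=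
  Finset.card_ne_zero_of_mem (Finset.mem_filter.mpr ⟨h, rfl⟩)

lemma notMem_arcs_of_outDeg_eq_zero (h : N.outDeg x = 0) : (x, y) ∉ N.arcs := fun hxy =>
  outDeg_ne_zero_of_mem hxy h

lemma exists_mem_arcs_of_outDeg_ne_zero (h : N.outDeg x ≠ 0) : ∃ y, (x, y) ∈ N.arcs := by
  obtain ⟨⟨x', y⟩, hxy⟩ := Finset.card_ne_zero.mp h
  rw [Finset.mem_filter] at hxy
  exact ⟨y, hxy.2 ▸ hxy.1⟩

lemma eq_of_inDeg_eq_one (h : N.inDeg w = 1) (hu : (u, w) ∈ N.arcs) (hv : (v, w) ∈ N.arcs) :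
    u = v :=
  congrArg Prod.fst <| Finset.card_le_one.mp h.le _ (Finset.mem_filter.mpr ⟨hu, rfl⟩) _
    (Finset.mem_filter.mpr ⟨hv, rfl⟩)

lemma eq_of_outDeg_eq_one (h : N.outDeg w = 1) (hu : (w, u) ∈ N.arcs) (hv : (w, v) ∈ N.arcs) :
    u = v :=
  congrArg Prod.snd <| Finset.card_le_one.mp h.le _ (Finset.mem_filter.mpr ⟨hu, rfl⟩) _
    (Finset.mem_filter.mpr ⟨hv, rfl⟩)

lemma inDeg_eq_of_perm (σ : Equiv.Perm ℕ) (h : ∀ u, (u, w) ∈ M.arcs ↔ (σ u, w) ∈ N.arcs) :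
    M.inDeg w = N.inDeg w := by
  unfold inDeg
  rw [← Finset.card_map (Equiv.prodCongr σ (Equiv.refl ℕ)).toEmbedding]
  congr 1
  ext ⟨u, t⟩
  simp only [Finset.mem_map_equiv, Equiv.prodCongr_symm, Equiv.refl_symm,
    Equiv.prodCongr_apply, Equiv.coe_refl, Prod.map_apply, id_eq, Finset.mem_filter,
    and_congr_left_iff]
  rintro rfl
  simpa using h (σ.symm u)

lemma outDeg_eq_of_perm (σ : Equiv.Perm ℕ) (h : ∀ v, (w, v) ∈ M.arcs ↔ (w, σ v) ∈ N.arcs) :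
    M.outDeg w = N.outDeg w := by
  unfold outDeg
  rw [← Finset.card_map (Equiv.prodCongr (Equiv.refl ℕ) σ).toEmbedding]
  congr 1
  ext ⟨t, v⟩
  simp only [Finset.mem_map_equiv, Equiv.prodCongr_symm, Equiv.refl_symm,
    Equiv.prodCongr_apply, Equiv.coe_refl, Prod.map_apply, id_eq, Finset.mem_filter,
    and_congr_left_iff]
  rintro rfl
  simpa using h (σ.symm v)

lemma inDeg_eq_one_of_isTreeVertex_or_isLeaf (h : N.IsTreeVertex x ∨ N.IsLeaf x) :
    N.inDeg x = 1 := by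
  rcases h with h | h <;> exact h.2.1

lemma mem_verts_of_isTreeVertex_or_isLeaf (h : N.IsTreeVertex x ∨ N.IsLeaf x) :
    x ∈ N.verts := by
  rcases h with h | h <;> exact h.1

lemma isTreeVertex_or_isLeaf_of_degrees (hx : x ∈ M.verts) (hin : M.inDeg x = N.inDeg x)
    (hout : M.outDeg x = N.outDeg x) (h : N.IsTreeVertex x ∨ N.IsLeaf x) :
    M.IsTreeVertex x ∨ M.IsLeaf x := by
  rcases h with ⟨-, h₁, h₂⟩ | ⟨-, h₁, h₂⟩
  · exact .inl ⟨hx, hin.trans h₁, hout.trans h₂⟩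
  · exact .inr ⟨hx, hin.trans h₁, hout.trans h₂⟩

theorem treeChild_of_degrees_of_children
    (hdeg : ∀ u w, (u, w) ∈ M.arcs → w ∈ M.verts →
      M.inDeg w = N.inDeg w ∧ M.outDeg w = N.outDeg w)
    (hchild : ∀ v ∈ M.verts, M.outDeg v ≠ 0 →
      ∃ c, (v, c) ∈ M.arcs ∧ c ∈ M.verts ∧ (N.IsTreeVertex c ∨ N.IsLeaf c)) :
    M.TreeChild := by
  intro v hv hout
  obtain ⟨c, hvc, hc, hgood⟩ := hchild v hv hout
  obtain ⟨hin, hout⟩ := hdeg v c hvc hc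
  exact ⟨c, hvc, isTreeVertex_or_isLeaf_of_degrees hc hin hout hgood⟩

end DNet

section

open DNet

variable {N M : DNet} {a b p g : ℕ}

theorem treeChild_of_reduceCherry_at_root (htc : N.TreeChild) (ha : N.IsLeaf a)
    (hb : N.IsLeaf b) (hpa : (p, a) ∈ N.arcs) (hpb : (p, b) ∈ N.arcs) (hp : N.inDeg p = 0)
    (hV : M.verts = N.verts \ {a, p}) (hA : M.arcs = N.arcs \ {(p, a), (p, b)}) :
    M.TreeChild := by
  have hpar_a : ∀ u, (u, a) ∈ N.arcs → u = p := fun u hu => eq_of_inDeg_eq_one ha.2.1 hu hpa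
  have hpar_b : ∀ u, (u, b) ∈ N.arcs → u = p := fun u hu => eq_of_inDeg_eq_one hb.2.1 hu hpb
  have hA' : ∀ u w, (u, w) ∈ M.arcs ↔ (u, w) ∈ N.arcs ∧ ¬(u = p ∧ (w = a ∨ w = b)) := by
    simp only [hA, Finset.mem_sdiff, Finset.mem_insert, Finset.mem_singleton, Prod.ext_iff]
    grind
  refine treeChild_of_degrees_of_children (N := N) (fun u w huw _ => ?_) fun v hv hout => ?_
  · have hw : w ≠ a ∧ w ≠ b ∧ w ≠ p := by grind
    exact ⟨inDeg_eq_of_perm 1 fun u => by grind [Equiv.Perm.one_apply],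
      outDeg_eq_of_perm 1 fun v => by grind [Equiv.Perm.one_apply]⟩
  · simp only [hV, Finset.mem_sdiff, Finset.mem_insert, Finset.mem_singleton, not_or] at hv ⊢
    obtain ⟨x, hx⟩ := exists_mem_arcs_of_outDeg_ne_zero hout
    obtain ⟨c, hvc, hc⟩ := htc v hv.1 (outDeg_ne_zero_of_mem (y := x) (by grind))
    have hc_in : N.inDeg c = 1 := inDeg_eq_one_of_isTreeVertex_or_isLeaf hc
    refine ⟨c, by grind, ⟨mem_verts_of_isTreeVertex_or_isLeaf hc, by grind, ?_⟩, hc⟩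
    rintro rfl
    omega

theorem treeChild_of_reduceCherry_of_parent (htc : N.TreeChild) (hab : a ≠ b) (ha : N.IsLeaf a)
    (hb : N.IsLeaf b) (hpa : (p, a) ∈ N.arcs) (hpb : (p, b) ∈ N.arcs) (hgp : (g, p) ∈ N.arcs)
    (hV : M.verts = N.verts \ {a, p})
    (hA : M.arcs = insert (g, b) (N.arcs \ {(g, p), (p, a), (p, b)})) :
    M.TreeChild := by
  have hpar_a : ∀ u, (u, a) ∈ N.arcs → u = p := fun u hu => eq_of_inDeg_eq_one ha.2.1 hu hpa
  have hpar_b : ∀ u, (u, b) ∈ N.arcs → u = p := fun u hu => eq_of_inDeg_eq_one hb.2.1 hu hpb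
  have hA' : ∀ u w, (u, w) ∈ M.arcs ↔ u = g ∧ w = b ∨
      (u, w) ∈ N.arcs ∧ ¬(u = g ∧ w = p) ∧ ¬(u = p ∧ (w = a ∨ w = b)) := by
    simp only [hA, Finset.mem_insert, Finset.mem_sdiff, Finset.mem_singleton, Prod.ext_iff]
    grind
  refine treeChild_of_degrees_of_children (N := N) (fun u w _ hw => ?_) fun v hv hout => ?_
  · simp only [hV, Finset.mem_sdiff, Finset.mem_insert, Finset.mem_singleton] at hw
    constructor
    · refine inDeg_eq_of_perm (if w = b then Equiv.swap g p else 1) fun u => ?_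
      split_ifs <;> simp only [Equiv.swap_apply_def, Equiv.Perm.one_apply] <;> grind
    · refine outDeg_eq_of_perm (if w = g then Equiv.swap p b else 1) fun u => ?_
      split_ifs <;> simp only [Equiv.swap_apply_def, Equiv.Perm.one_apply] <;> grind
  · simp only [hV, Finset.mem_sdiff, Finset.mem_insert, Finset.mem_singleton, not_or] at hv ⊢
    by_cases hv_g : v = g
    · exact ⟨b, by grind, ⟨hb.1, hab.symm, by grind⟩, .inr hb⟩
    obtain ⟨x, hx⟩ := exists_mem_arcs_of_outDeg_ne_zero hout
    obtain ⟨c, hvc, hc⟩ := htc v hv.1 (outDeg_ne_zero_of_mem (y := x) (by grind))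
    have hc_in : N.inDeg c = 1 := inDeg_eq_one_of_isTreeVertex_or_isLeaf hc
    refine ⟨c, by grind, ⟨mem_verts_of_isTreeVertex_or_isLeaf hc, by grind, ?_⟩, hc⟩
    rintro rfl
    exact hv_g (eq_of_inDeg_eq_one hc_in hvc hgp)

theorem RReduceCherry.treeChild (h : RReduceCherry N M a b) (htc : N.TreeChild) :
    M.TreeChild := by
  obtain ⟨⟨hab, ha, hb, -⟩, p, hpa, hpb, ⟨hp, hV, hA⟩ | ⟨g, hgp, hV, hA⟩⟩ := h
  · exact treeChild_of_reduceCherry_at_root htc ha hb hpa hpb hp hV hA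
  · exact treeChild_of_reduceCherry_of_parent htc hab ha hb hpa hpb hgp hV hA

theorem RReduceRetCherry.treeChild (h : RReduceRetCherry N M a b) (htc : N.TreeChild) :
    M.TreeChild := by
  obtain ⟨⟨hab, ha, hb, -⟩, pa, pb, qa, qb, hpaa, hpbb, hpa, hpbpa, hqapa, hqa, hqbpb, hV, hA⟩ := h
  have hpar_a : ∀ u, (u, a) ∈ N.arcs → u = pa := fun u hu => eq_of_inDeg_eq_one ha.2.1 hu hpaa
  have hpar_b : ∀ u, (u, b) ∈ N.arcs → u = pb := fun u hu => eq_of_inDeg_eq_one hb.2.1 hu hpbb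
  have hchild_pa : ∀ c, (pa, c) ∈ N.arcs → c = a := fun c hc => eq_of_outDeg_eq_one hpa.2.2 hc hpaa
  have hleaf_a : ∀ c, (a, c) ∉ N.arcs := fun c => notMem_arcs_of_outDeg_eq_zero ha.2.2
  have hA' : ∀ u w, (u, w) ∈ M.arcs ↔ u = qa ∧ w = a ∨ u = qb ∧ w = b ∨
      (u, w) ∈ N.arcs ∧ ¬(u = pb ∧ (w = pa ∨ w = b)) ∧ ¬(u = pa ∧ w = a) ∧
        ¬(u = qa ∧ w = pa) ∧ ¬(u = qb ∧ w = pb) := by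
    simp only [hA, Finset.mem_insert, Finset.mem_sdiff, Finset.mem_singleton, Prod.ext_iff]
    grind
  refine treeChild_of_degrees_of_children (N := N) (fun u w _ hw => ?_) fun v hv hout => ?_
  · simp only [hV, Finset.mem_sdiff, Finset.mem_insert, Finset.mem_singleton] at hw
    constructor
    · refine inDeg_eq_of_perm
        (if w = a then Equiv.swap qa pa else if w = b then Equiv.swap qb pb else 1) fun u => ?_
      split_ifs <;> simp only [Equiv.swap_apply_def, Equiv.Perm.one_apply] <;> grind
    · refine outDeg_eq_of_perm (if w = qa then
          (if w = qb then Equiv.swap pa a * Equiv.swap pb b else Equiv.swap pa a)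
        else if w = qb then Equiv.swap pb b else 1) fun u => ?_
      split_ifs <;>
        simp only [Equiv.swap_apply_def, Equiv.Perm.one_apply, Equiv.Perm.mul_apply] <;> grind
  · simp only [hV, Finset.mem_sdiff, Finset.mem_insert, Finset.mem_singleton, not_or] at hv ⊢
    by_cases hv_qa : v = qa
    · exact ⟨a, by grind, ⟨ha.1, by grind, by grind⟩, .inr ha⟩
    by_cases hv_qb : v = qb
    · exact ⟨b, by grind, ⟨hb.1, by grind, by grind⟩, .inr hb⟩
    obtain ⟨x, hx⟩ := exists_mem_arcs_of_outDeg_ne_zero hout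
    obtain ⟨c, hvc, hc⟩ := htc v hv.1 (outDeg_ne_zero_of_mem (y := x) (by grind))
    have hc_in : N.inDeg c = 1 := inDeg_eq_one_of_isTreeVertex_or_isLeaf hc
    refine ⟨c, by grind, ⟨mem_verts_of_isTreeVertex_or_isLeaf hc, ?_, ?_⟩, hc⟩
    · rintro rfl
      exact absurd hpa.2.1 (by omega)
    · rintro rfl
      exact hv_qb (eq_of_inDeg_eq_one hc_in hvc hqbpb)

end

theorem treeChild_preserved_by_reduction_general (R M : DNet) (a b : ℕ) (htc : R.TreeChild)
    (hred : RReduceCherry R M a b ∨ RReduceRetCherry R M a b) :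
    M.TreeChild :=
  hred.elim (·.treeChild htc) (·.treeChild htc)

/-- A cherry reduction applied to a rooted binary tree-child network yields
a rooted binary tree-child network. -/
theorem treeChild_preserved_by_reduction (R M : DNet) (X : Finset ℕ) (a b : ℕ)
    (hR : IsRootedBinaryNet R X) (htc : R.TreeChild)
    (hred : RReduceCherry R M a b ∨ RReduceRetCherry R M a b) :
    M.TreeChild :=
  treeChild_preserved_by_reduction_general R M a b htc hred
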